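/- arXiv:1003.3853 — 8 statements merged into one kernel-verified Lean document; each statement's English description precedes it below -/
import Mathlib

section
/- A group containing an infinite acentral subgroup of infinite index is not presentable by a product. -/
/-- A group is presentable by a product if it has elementwise-commuting infinite
subgroups whose union generates a finite-index subgroup. -/
def PresentableByProduct (G : Type*) [Group G] : Prop :=
  ∃ G₁ G₂ : Subgroup G, (G₁ : Set G).Infinite ∧ (G₂ : Set G).Infinite ∧
    (∀ g₁ ∈ G₁, ∀ g₂ ∈ G₂, g₁ * g₂ = g₂ * g₁) ∧
    (Subgroup.closure ((G₁ : Set G) ∪ (G₂ : Set G))).FiniteIndex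

/-- A subgroup is acentral if the centraliser of each of its non-trivial elements
is contained in it. -/
def IsAcentral {G : Type*} [Group G] (A : Subgroup G) : Prop :=
  ∀ g ∈ A, g ≠ 1 → ∀ x : G, x * g = g * x → x ∈ A


/-!
Suppose `Γ₁, Γ₂` are commuting infinite subgroups generating a finite-index subgroup `H`.
Since `A` is infinite, `A ∩ H` contains some `a ≠ 1`, and `a = g₁ g₂` with `gᵢ ∈ Γᵢ`. Each `gᵢ`
commutes with `a`, so lies in `A` by acentrality, and one of them, say `g₁`, is non-trivial.
Then `Γ₂ ⊆ C(g₁) ⊆ A`, and for any `1 ≠ b ∈ Γ₂` also `Γ₁ ⊆ C(b) ⊆ A`. Hence `H ≤ A`, so `A` has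
finite index.
-/

open Subgroup
open scoped Pointwise

namespace IsAcentral

variable {G : Type*} [Group G] {A G₁ G₂ : Subgroup G}

theorem centralizer_le (hA : IsAcentral A) {g : G} (hgA : g ∈ A) (hg : g ≠ 1) :
    centralizer {g} ≤ A :=
  fun x hx => hA g hgA hg x (mem_centralizer_singleton_iff.mp hx)

theorem sup_le_of_mem_left (hA : IsAcentral A) (hcomm : G₁ ≤ centralizer G₂) (h₂ : G₂ ≠ ⊥)
    {g : G} (hg₁ : g ∈ G₁) (hgA : g ∈ A) (hg : g ≠ 1) : G₁ ⊔ G₂ ≤ A := by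
  have hG₂A : G₂ ≤ A := fun y hy =>
    hA.centralizer_le hgA hg (mem_centralizer_singleton_iff.mpr (hcomm hg₁ y hy))
  obtain ⟨b, hb₂, hb⟩ := G₂.bot_or_exists_ne_one.resolve_left h₂
  have hG₁A : G₁ ≤ A := fun x hx =>
    hA.centralizer_le (hG₂A hb₂) hb (mem_centralizer_singleton_iff.mpr (hcomm hx b hb₂).symm)
  exact sup_le hG₁A hG₂A

theorem sup_le_of_mem_sup (hA : IsAcentral A) (hcomm : G₁ ≤ centralizer G₂) (h₁ : G₁ ≠ ⊥)
    (h₂ : G₂ ≠ ⊥) {a : G} (haH : a ∈ G₁ ⊔ G₂) (haA : a ∈ A) (ha : a ≠ 1) : G₁ ⊔ G₂ ≤ A := by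
  have hnorm : G₁ ≤ normalizer (G₂ : Set G) := hcomm.trans (centralizer_le_normalizer _)
  have hprod : a ∈ (G₁ : Set G) * (G₂ : Set G) := by
    rwa [← coe_mul_of_left_le_normalizer_right G₁ G₂ hnorm]
  obtain ⟨g₁, hg₁, g₂, hg₂, rfl⟩ := Set.mem_mul.mp hprod
  have hcg : Commute g₁ g₂ := (hcomm hg₁ g₂ hg₂).symm
  have hg₁A : g₁ ∈ A := hA _ haA ha g₁ ((Commute.refl g₁).mul_right hcg)
  have hg₂A : g₂ ∈ A := hA _ haA ha g₂ (hcg.symm.mul_right (Commute.refl g₂))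
  rcases eq_or_ne g₁ 1 with rfl | hg₁1
  · rw [sup_comm]
    exact hA.sup_le_of_mem_left (le_centralizer_iff.mp hcomm) h₁ hg₂ hg₂A (by simpa using ha)
  · exact hA.sup_le_of_mem_left hcomm h₂ hg₁ hg₁A hg₁1

end IsAcentral

theorem Subgroup.exists_ne_one_mem_of_finiteIndex_of_infinite {G : Type*} [Group G]
    (H : Subgroup G) [H.FiniteIndex] {A : Subgroup G} (hA : (A : Set G).Infinite) :
    ∃ a ∈ H, a ∈ A ∧ a ≠ 1 := by
  by_contra! h
  have hbot : H.subgroupOf A = ⊥ :=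
    (eq_bot_iff_forall _).mpr fun a ha => Subtype.ext (h a ha a.2)
  have : Infinite A := hA.to_subtype
  have hindex := (H.subgroupOf A).index_ne_zero_of_finite
  rw [hbot, index_bot, Nat.card_eq_zero_of_infinite] at hindex
  exact hindex rfl

theorem Subgroup.ne_bot_of_infinite {G : Type*} [Group G] {H : Subgroup G}
    (hH : (H : Set G).Infinite) : H ≠ ⊥ := by
  rintro rfl
  exact hH (Set.finite_singleton 1)

theorem stmt_3 {Γ : Type*} [Group Γ] (A : Subgroup Γ)
    (hac : IsAcentral A) (hinf : (A : Set Γ).Infinite) (hidx : A.index = 0) :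
    ¬ PresentableByProduct Γ := by
  rintro ⟨G₁, G₂, h₁, h₂, hcomm, hfin⟩
  rw [← sup_eq_closure] at hfin
  obtain ⟨a, haH, haA, ha⟩ := (G₁ ⊔ G₂).exists_ne_one_mem_of_finiteIndex_of_infinite hinf
  have hle : G₁ ⊔ G₂ ≤ A := hac.sup_le_of_mem_sup (fun x hx y hy => (hcomm x hx y hy).symm)
    (ne_bot_of_infinite h₁) (ne_bot_of_infinite h₂) haH haA ha
  exact (finiteIndex_of_le hle).index_ne_zero hidx
end

section
/- Let 1 → N → Γ → Q → 1 be an extension of groups in which N is an acentral subgroup of Γ, and suppose both N and Q are infinite. Then Γ is not presentable by a product. -/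
theorem stmt_4 {Γ : Type*} [Group Γ] (N : Subgroup Γ) [N.Normal]
    (hac : IsAcentral N) (hNinf : (N : Set Γ).Infinite) (hQinf : Infinite (Γ ⧸ N)) :
    ¬ PresentableByProduct Γ := by
  rintro ⟨G₁, G₂, h1inf, h2inf, hcomm, hfin⟩
  set H := Subgroup.closure ((G₁ : Set Γ) ∪ (G₂ : Set Γ)) with hHdef
  -- every element of H is a product of an element of G₁ and one of G₂
  have hprod : ∀ x ∈ H, ∃ a ∈ G₁, ∃ b ∈ G₂, x = a * b := by
    intro x hx
    induction hx using Subgroup.closure_induction with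
    | mem y hy =>
      rcases hy with hy | hy
      · exact ⟨y, hy, 1, one_mem _, (mul_one y).symm⟩
      · exact ⟨1, one_mem _, y, hy, (one_mul y).symm⟩
    | one => exact ⟨1, one_mem _, 1, one_mem _, (one_mul 1).symm⟩
    | mul a b ha hb iha ihb =>
      obtain ⟨a1, ha1, a2, ha2, rfl⟩ := iha
      obtain ⟨b1, hb1, b2, hb2, rfl⟩ := ihb
      refine ⟨a1 * b1, mul_mem ha1 hb1, a2 * b2, mul_mem ha2 hb2, ?_⟩
      have hc : Commute a2 b1 := (hcomm b1 hb1 a2 ha2).symm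
      exact hc.mul_mul_mul_comm a1 b2
    | inv a ha iha =>
      obtain ⟨a1, ha1, a2, ha2, rfl⟩ := iha
      refine ⟨a1⁻¹, inv_mem ha1, a2⁻¹, inv_mem ha2, ?_⟩
      have hc : Commute a1 a2 := hcomm a1 ha1 a2 ha2
      rw [mul_inv_rev, (hc.inv_inv).eq]
  -- find a nontrivial element of N ∩ H
  haveI : Infinite N := Set.infinite_coe_iff.mpr hNinf
  haveI : H.FiniteIndex := hfin
  obtain ⟨n₁, n₂, hne, heq⟩ :=
    Finite.exists_ne_map_eq_of_infinite (fun n : N => (QuotientGroup.mk (n : Γ) : Γ ⧸ H))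
  have hnH : (n₁ : Γ)⁻¹ * n₂ ∈ H := (QuotientGroup.eq.mp heq)
  have hnN : (n₁ : Γ)⁻¹ * n₂ ∈ N := mul_mem (inv_mem n₁.2) n₂.2
  have hn1 : (n₁ : Γ)⁻¹ * n₂ ≠ 1 := by
    intro h
    apply hne
    have : (n₁ : Γ) = n₂ := by
      have := congrArg (fun y => (n₁ : Γ) * y) h
      simpa [mul_assoc] using this.symm
    exact Subtype.ext this
  set n : Γ := (n₁ : Γ)⁻¹ * n₂ with hn
  obtain ⟨a, ha, b, hb, hab⟩ := hprod n hnH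
  have hcab : a * b = b * a := hcomm a ha b hb
  have haN : a ∈ N := by
    refine hac n hnN hn1 a ?_
    rw [hab]
    exact ((Commute.refl a).mul_right hcab)
  have hbN : b ∈ N := by
    refine hac n hnN hn1 b ?_
    rw [hab]
    exact ((show Commute b a from hcab.symm).mul_right (Commute.refl b))
  -- both G₁ and G₂ are contained in N
  have key : G₁ ≤ N ∧ G₂ ≤ N := by
    have hG2 : ∀ g ∈ N, g ≠ 1 → g ∈ G₁ → G₂ ≤ N := fun g hgN hg1 hgG₁ x hx =>
      hac g hgN hg1 x (hcomm g hgG₁ x hx).symm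
    have hG1 : ∀ g ∈ N, g ≠ 1 → g ∈ G₂ → G₁ ≤ N := fun g hgN hg1 hgG₂ x hx =>
      hac g hgN hg1 x (hcomm x hx g hgG₂)
    have hcases : a ≠ 1 ∨ b ≠ 1 := by
      by_contra h
      push_neg at h
      exact hn1 (by rw [hab, h.1, h.2, one_mul])
    rcases hcases with hA | hB
    · have h2 : G₂ ≤ N := hG2 a haN hA ha
      obtain ⟨g, hg, hgne⟩ := h2inf.exists_notMem_finite (Set.finite_singleton 1)
      exact ⟨hG1 g (h2 hg) (by simpa using hgne) hg, h2⟩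
    · have h1 : G₁ ≤ N := hG1 b hbN hB hb
      obtain ⟨g, hg, hgne⟩ := h1inf.exists_notMem_finite (Set.finite_singleton 1)
      exact ⟨h1, hG2 g (h1 hg) (by simpa using hgne) hg⟩
  have hHN : H ≤ N := by
    rw [hHdef]
    exact (Subgroup.closure_le N).mpr (Set.union_subset key.1 key.2)
  haveI : N.FiniteIndex := Subgroup.finiteIndex_of_le hHN
  exact not_finite (Γ ⧸ N)
end

section
/- The solvable group Γ = ℤ² ⋊_A ℤ, where the generator of ℤ acts on ℤ² by the matrix A = [[2,1],[1,1]], is not presentable by a product: there do not exist elementwise-commuting infinite subgroups Γ₁, Γ₂ ⊆ Γ whose union generates a finite-index subgroup of Γ. -/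
namespace Matrix

theorem sq_eq_trace_smul_sub_det_smul_fin_two {R : Type*} [CommRing R]
    (M : Matrix (Fin 2) (Fin 2) R) : M ^ 2 = M.trace • M - M.det • 1 := by
  ext i j
  fin_cases i <;> fin_cases j <;>
    simp [sq, mul_apply, trace_fin_two, det_fin_two] <;> ring

theorem trace_pow_add_two_fin_two {R : Type*} [CommRing R] (M : Matrix (Fin 2) (Fin 2) R)
    (n : ℕ) :
    (M ^ (n + 2)).trace = M.trace * (M ^ (n + 1)).trace - M.det * (M ^ n).trace := by
  rw [pow_add, sq_eq_trace_smul_sub_det_smul_fin_two, mul_sub, mul_smul_comm, mul_smul_comm,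
    mul_one, ← pow_succ, trace_sub, trace_smul, trace_smul, smul_eq_mul, smul_eq_mul]

theorem det_sub_one_fin_two {R : Type*} [CommRing R] (M : Matrix (Fin 2) (Fin 2) R) :
    (M - 1).det = M.det - M.trace + 1 := by
  simp [det_fin_two, trace_fin_two]
  ring

variable {M : Matrix (Fin 2) (Fin 2) ℤ}

theorem two_le_trace_pow_and_trace_pow_lt_succ (hdet : M.det = 1) (htr : 3 ≤ M.trace) (n : ℕ) :
    2 ≤ (M ^ n).trace ∧ (M ^ n).trace < (M ^ (n + 1)).trace := by
  induction n with
  | zero => simp only [pow_zero, zero_add, pow_one, trace_one, Fintype.card_fin]; omega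
  | succ n ih =>
    refine ⟨by omega, ?_⟩
    rw [trace_pow_add_two_fin_two, hdet]
    nlinarith

theorem eq_zero_of_pow_mulVec_eq_self (hdet : M.det = 1) (htr : 3 ≤ M.trace) {n : ℕ}
    (hn : n ≠ 0) {v : Fin 2 → ℤ} (hv : (M ^ n) *ᵥ v = v) : v = 0 := by
  refine eq_zero_of_mulVec_eq_zero (M := M ^ n - 1) ?_
    (by rw [sub_mulVec, one_mulVec, hv, sub_self])
  obtain ⟨m, rfl⟩ := Nat.exists_eq_add_one_of_ne_zero hn
  have := two_le_trace_pow_and_trace_pow_lt_succ hdet htr m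
  rw [det_sub_one_fin_two, det_pow, hdet, one_pow]
  omega

theorem GeneralLinearGroup.eq_zero_of_zpow_mulVec_eq_self {A : GL (Fin 2) ℤ}
    (hdet : (A : Matrix (Fin 2) (Fin 2) ℤ).det = 1) (htr : 3 ≤ (A : Matrix (Fin 2) (Fin 2) ℤ).trace)
    {k : ℤ} (hk : k ≠ 0) {v : Fin 2 → ℤ}
    (hv : ((A ^ k : GL (Fin 2) ℤ) : Matrix (Fin 2) (Fin 2) ℤ) *ᵥ v = v) : v = 0 := by
  obtain ⟨n, rfl | rfl⟩ := Int.eq_nat_or_neg k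
  · rw [zpow_natCast, Units.val_pow_eq_pow_val] at hv
    exact eq_zero_of_pow_mulVec_eq_self hdet htr (by omega) hv
  · refine eq_zero_of_pow_mulVec_eq_self hdet htr (n := n) (by omega) ?_
    conv_lhs => rw [← hv]
    rw [← Units.val_pow_eq_pow_val, mulVec_mulVec, _root_.zpow_neg, zpow_natCast, ← Units.val_mul,
      mul_inv_cancel, Units.val_one, one_mulVec]

end Matrix

namespace SemidirectProduct

variable {N H : Type*} [CommGroup N] [CommGroup H] {φ : H →* MulAut N}

theorem eq_one_of_commute_of_right_eq_one (hφ : ∀ h ≠ 1, MonoidHom.FixedPointFree (φ h))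
    {g x : N ⋊[φ] H} (hg : g.right ≠ 1) (hx : x.right = 1) (hgx : Commute g x) : x = 1 := by
  have hleft := congrArg left hgx.eq
  rw [mul_left, mul_left, hx, map_one, MulAut.one_apply, mul_comm x.left] at hleft
  exact SemidirectProduct.ext (hφ g.right hg x.left (mul_left_cancel hleft)) hx

theorem commute_of_commute_of_right_ne_one (hφ : ∀ h ≠ 1, MonoidHom.FixedPointFree (φ h))
    {g x y : N ⋊[φ] H} (hg : g.right ≠ 1) (hgx : Commute g x) (hgy : Commute g y) :
    Commute x y := by
  rw [← commutatorElement_eq_one_iff_commute]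
  refine eq_one_of_commute_of_right_eq_one hφ hg ?_ ?_
  · rw [← rightHom_eq_right, map_commutatorElement, commutatorElement_eq_one_iff_commute]
    exact Commute.all _ _
  · simp only [commutatorElement_def]
    exact ((hgx.mul_right hgy).mul_right hgx.inv_right).mul_right hgy.inv_right

theorem exists_ne_one_mem_of_finiteIndex [Infinite N] (K : Subgroup (N ⋊[φ] H)) [K.FiniteIndex] :
    ∃ z ∈ K, z.right = 1 ∧ z ≠ 1 := by
  have hcomap : (K.comap inl).index ≠ 0 := by
    rw [Subgroup.index_comap]
    exact (K.subgroupOf _).index_ne_zero_of_finite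
  have : K.comap inl ≠ ⊥ := by
    rintro hbot
    rw [hbot, Subgroup.index_bot, Nat.card_eq_zero_of_infinite] at hcomap
    exact hcomap rfl
  obtain ⟨⟨n, hn⟩, hn1⟩ := Subgroup.ne_bot_iff_exists_ne_one.1 this
  exact ⟨inl n, hn, right_inl n, (map_ne_one_iff _ inl_injective).2 (by simpa using hn1)⟩

theorem index_ker_rightHom [Infinite H] : (rightHom : N ⋊[φ] H →* H).ker.index = 0 := by
  rw [Subgroup.index_ker, MonoidHom.range_eq_top.2 rightHom_surjective, Subgroup.card_top,
    Nat.card_eq_zero_of_infinite]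

theorem le_ker_rightHom_of_commute_of_finiteIndex [Infinite N]
    (hφ : ∀ h ≠ 1, MonoidHom.FixedPointFree (φ h)) {G₁ G₂ : Subgroup (N ⋊[φ] H)}
    (h₂ : (G₂ : Set (N ⋊[φ] H)).Infinite) (hcomm : ∀ g₁ ∈ G₁, ∀ g₂ ∈ G₂, g₁ * g₂ = g₂ * g₁)
    (hfin : (Subgroup.closure ((G₁ : Set (N ⋊[φ] H)) ∪ G₂)).FiniteIndex) :
    G₁ ≤ rightHom.ker := by
  intro a ha
  by_contra ha1
  rw [MonoidHom.mem_ker, rightHom_eq_right] at ha1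
  by_cases hG₂ : ∃ b ∈ G₂, b.right ≠ 1
  · obtain ⟨b, hb, hb1⟩ := hG₂
    have hcent : Subgroup.closure ((G₁ : Set (N ⋊[φ] H)) ∪ G₂) ≤ Subgroup.centralizer {a} := by
      refine (Subgroup.closure_le _).2 ?_
      rintro g (hg | hg) <;> rw [SetLike.mem_coe, Subgroup.mem_centralizer_singleton_iff]
      · exact (commute_of_commute_of_right_ne_one hφ hb1 (hcomm g hg b hb).symm
          (hcomm a ha b hb).symm).eq
      · exact (hcomm a ha g hg).symm
    obtain ⟨z, hz, hz1, hz_ne⟩ :=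
      exists_ne_one_mem_of_finiteIndex (Subgroup.closure ((G₁ : Set (N ⋊[φ] H)) ∪ G₂))
    exact hz_ne (eq_one_of_commute_of_right_eq_one hφ ha1 hz1
      (Subgroup.mem_centralizer_singleton_iff.1 (hcent hz)).symm)
  · push Not at hG₂
    obtain ⟨x, hx, hx1⟩ := h₂.nontrivial.exists_ne 1
    exact hx1 (eq_one_of_commute_of_right_eq_one hφ ha1 (hG₂ x hx) (hcomm a ha x hx))

theorem not_presentableByProduct [Infinite N] [Infinite H]
    (hφ : ∀ h ≠ 1, MonoidHom.FixedPointFree (φ h)) : ¬ PresentableByProduct (N ⋊[φ] H) := by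
  rintro ⟨G₁, G₂, h₁, h₂, hcomm, hfin⟩
  have hG₁ := le_ker_rightHom_of_commute_of_finiteIndex hφ h₂ hcomm hfin
  have hG₂ := le_ker_rightHom_of_commute_of_finiteIndex hφ h₁
    (fun g₂ hg₂ g₁ hg₁ => (hcomm g₁ hg₁ g₂ hg₂).symm) (by rwa [Set.union_comm])
  have := Subgroup.finiteIndex_of_le ((Subgroup.closure_le _).2 (Set.union_subset hG₁ hG₂))
  exact this.index_ne_zero index_ker_rightHom

end SemidirectProduct

theorem stmt_8 (A : GL (Fin 2) ℤ)
    (hA : (A : Matrix (Fin 2) (Fin 2) ℤ) = !![2, 1; 1, 1])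
    (φ : Multiplicative ℤ →* MulAut (Multiplicative (Fin 2 → ℤ)))
    (hφ : ∀ (k : ℤ) (v : Fin 2 → ℤ),
      φ (Multiplicative.ofAdd k) (Multiplicative.ofAdd v)
        = Multiplicative.ofAdd
            (((A ^ k : GL (Fin 2) ℤ) : Matrix (Fin 2) (Fin 2) ℤ).mulVec v)) :
    ¬ PresentableByProduct ((Multiplicative (Fin 2 → ℤ)) ⋊[φ] Multiplicative ℤ) := by
  have hdet : (A : Matrix (Fin 2) (Fin 2) ℤ).det = 1 := by simp [hA, Matrix.det_fin_two]
  have htr : 3 ≤ (A : Matrix (Fin 2) (Fin 2) ℤ).trace := by simp [hA, Matrix.trace_fin_two]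
  refine SemidirectProduct.not_presentableByProduct fun k hk v hv => ?_
  have hfix := hφ k.toAdd v.toAdd
  rw [ofAdd_toAdd, ofAdd_toAdd, hv] at hfix
  exact toAdd_eq_zero.1 <| Matrix.GeneralLinearGroup.eq_zero_of_zpow_mulVec_eq_self hdet htr
    (toAdd_eq_zero.not.2 hk) (congrArg Multiplicative.toAdd hfix).symm
end

section
/- Let n ≥ 2 and A ∈ GL(n,ℤ) be a matrix such that no non-trivial power of A has eigenvalue 1 (i.e., A^k v = v with k ≠ 0 and v ∈ ℤⁿ implies v = 0). Then the semidirect product ℤⁿ ⋊_A ℤ is not presentable by a product. -/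
theorem stmt_9 (n : ℕ) (hn : 2 ≤ n) (A : GL (Fin n) ℤ)
    (hfree : ∀ k : ℤ, k ≠ 0 → ∀ v : Fin n → ℤ,
      ((A ^ k : GL (Fin n) ℤ) : Matrix (Fin n) (Fin n) ℤ).mulVec v = v → v = 0)
    (φ : Multiplicative ℤ →* MulAut (Multiplicative (Fin n → ℤ)))
    (hφ : ∀ (k : ℤ) (v : Fin n → ℤ),
      φ (Multiplicative.ofAdd k) (Multiplicative.ofAdd v)
        = Multiplicative.ofAdd
            (((A ^ k : GL (Fin n) ℤ) : Matrix (Fin n) (Fin n) ℤ).mulVec v)) :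
    ¬ PresentableByProduct ((Multiplicative (Fin n → ℤ)) ⋊[φ] Multiplicative ℤ) := by
  set G := (Multiplicative (Fin n → ℤ)) ⋊[φ] Multiplicative ℤ with hGdef
  rintro ⟨G₁, G₂, h1, h2, hcomm, hfin⟩
  -- φ applied to arbitrary elements
  have hφ' : ∀ (r : Multiplicative ℤ) (w : Multiplicative (Fin n → ℤ)),
      φ r w = Multiplicative.ofAdd
        (((A ^ (r.toAdd) : GL (Fin n) ℤ) : Matrix (Fin n) (Fin n) ℤ).mulVec w.toAdd) := by
    intro r w
    simpa using hφ r.toAdd w.toAdd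
  -- key uniqueness lemma: two elements commuting with a fixed element of nonzero
  -- right component and with equal right components are equal
  have key : ∀ g x y : G, g.right.toAdd ≠ 0 → g * x = x * g → g * y = y * g →
      x.right = y.right → x = y := by
    intro g x y hk hgx hgy hr
    have hx : g.left * φ g.right x.left = x.left * φ x.right g.left :=
      congrArg SemidirectProduct.left hgx
    have hy : g.left * φ g.right y.left = y.left * φ y.right g.left :=
      congrArg SemidirectProduct.left hgy
    rw [hφ', hφ'] at hx hy
    have hx' := congrArg Multiplicative.toAdd hx
    have hy' := congrArg Multiplicative.toAdd hy
    simp only [toAdd_mul, toAdd_ofAdd] at hx' hy'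
    rw [hr] at hx'
    have hsub : ((A ^ g.right.toAdd : GL (Fin n) ℤ) : Matrix (Fin n) (Fin n) ℤ).mulVec
        (x.left.toAdd - y.left.toAdd) = x.left.toAdd - y.left.toAdd := by
      rw [Matrix.mulVec_sub]
      linear_combination hx' - hy'
    have := hfree g.right.toAdd hk _ hsub
    have hleft : x.left = y.left := by
      have : x.left.toAdd = y.left.toAdd := by
        have h0 := sub_eq_zero.mp this
        exact h0
      exact Multiplicative.toAdd.injective this
    exact SemidirectProduct.ext hleft hr
  -- the main argument, assuming G₁ contains an element with nonzero right part
  have main : ∀ X Y : Subgroup G, (Y : Set G).Infinite →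
      (∀ x ∈ X, ∀ y ∈ Y, x * y = y * x) →
      (Subgroup.closure ((X : Set G) ∪ (Y : Set G))).FiniteIndex →
      (∃ g ∈ X, g.right.toAdd ≠ 0) → False := by
    rintro X Y hYinf hXY hHfin ⟨g₁, hg₁, hk⟩
    -- injectivity of right component on Y
    have injY : ∀ x ∈ Y, ∀ y ∈ Y, x.right = y.right → x = y := fun x hx y hy hr =>
      key g₁ x y hk (hXY g₁ hg₁ x hx) (hXY g₁ hg₁ y hy) hr
    -- Y contains an element with nonzero right part
    have hEY : ∃ g ∈ Y, g.right.toAdd ≠ 0 := by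
      by_contra h
      push_neg at h
      have hsub : (Y : Set G) ⊆ {1} := by
        intro x hx
        have hx1 : x.right = (1 : G).right := by
          have := h x hx
          simpa using toAdd_eq_zero.mp this
        exact injY x hx 1 (one_mem Y) hx1
      exact hYinf (Set.Finite.subset (Set.finite_singleton 1) hsub)
    obtain ⟨g₂, hg₂, hm⟩ := hEY
    have injX : ∀ x ∈ X, ∀ y ∈ X, x.right = y.right → x = y := fun x hx y hy hr =>
      key g₂ x y hm (hXY x hx g₂ hg₂).symm (hXY y hy g₂ hg₂).symm hr
    -- pairwise commutation on the union
    have hpair : ∀ x ∈ (X : Set G) ∪ (Y : Set G), ∀ y ∈ (X : Set G) ∪ (Y : Set G),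
        Commute x y := by
      rintro x (hx | hx) y (hy | hy)
      · exact injX (x * y) (mul_mem hx hy) (y * x) (mul_mem hy hx)
          (mul_comm x.right y.right)
      · exact hXY x hx y hy
      · exact (hXY y hy x hx).symm
      · exact injY (x * y) (mul_mem hx hy) (y * x) (mul_mem hy hx)
          (mul_comm x.right y.right)
    set H := Subgroup.closure ((X : Set G) ∪ (Y : Set G)) with hHdef
    have Habel : ∀ x ∈ H, ∀ y ∈ H, Commute x y := by
      intro x hx y hy
      refine Subgroup.closure_induction₂ (p := fun a b _ _ => Commute a b)
        (fun a b ha hb => hpair a ha b hb)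
        (fun a _ => Commute.one_left a) (fun a _ => Commute.one_right a)
        (fun a b c _ _ _ h1 h2 => h1.mul_left h2)
        (fun a b c _ _ _ h1 h2 => h1.mul_right h2)
        (fun a b _ _ h => h.inv_left) (fun a b _ _ h => h.inv_right) hx hy
    -- a nontrivial purely-left element of H
    let w₀ : Fin n → ℤ := Pi.single (⟨0, by omega⟩ : Fin n) 1
    let e : G := SemidirectProduct.inl (Multiplicative.ofAdd w₀)
    obtain ⟨m, hm0, -, hmH⟩ :=
      Subgroup.exists_pow_mem_of_index_ne_zero hHfin.index_ne_zero e
    have hg₁H : g₁ ∈ H := Subgroup.subset_closure (Or.inl hg₁)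
    have hc : g₁ * e ^ m = e ^ m * g₁ := Habel g₁ hg₁H (e ^ m) hmH
    -- compute with e ^ m = inl (ofAdd (m • w₀))
    have hem : e ^ m = SemidirectProduct.inl (Multiplicative.ofAdd (m • w₀)) := by
      rw [show e = SemidirectProduct.inl (Multiplicative.ofAdd w₀) from rfl, ← map_pow,
        ofAdd_nsmul]
    rw [hem] at hc
    have hcl : g₁.left * φ g₁.right (Multiplicative.ofAdd (m • w₀))
        = Multiplicative.ofAdd (m • w₀) * φ (1 : Multiplicative ℤ) g₁.left :=
      congrArg SemidirectProduct.left hc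
    simp only [map_one, MulAut.one_apply] at hcl
    rw [hφ' g₁.right] at hcl
    have hcl' := congrArg Multiplicative.toAdd hcl
    simp only [toAdd_mul, toAdd_ofAdd] at hcl'
    have hfix : ((A ^ g₁.right.toAdd : GL (Fin n) ℤ) : Matrix (Fin n) (Fin n) ℤ).mulVec
        (m • w₀) = m • w₀ := by
      linear_combination hcl'
    have := hfree g₁.right.toAdd hk _ hfix
    have hz := congrFun this ⟨0, by omega⟩
    simp [w₀, Pi.single_apply] at hz
    omega
  -- split into cases
  by_cases hc1 : ∃ g ∈ G₁, g.right.toAdd ≠ 0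
  · exact main G₁ G₂ h2 hcomm hfin hc1
  · by_cases hc2 : ∃ g ∈ G₂, g.right.toAdd ≠ 0
    · refine main G₂ G₁ h1 (fun x hx y hy => (hcomm y hy x hx).symm) ?_ hc2
      rwa [Set.union_comm]
    · push_neg at hc1 hc2
      have hsub : Subgroup.closure ((G₁ : Set G) ∪ (G₂ : Set G)) ≤
          (SemidirectProduct.rightHom : G →* Multiplicative ℤ).ker := by
        rw [Subgroup.closure_le]
        rintro x (hx | hx)
        · exact toAdd_eq_zero.mp (hc1 x hx)
        · exact toAdd_eq_zero.mp (hc2 x hx)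
      have hker0 : (SemidirectProduct.rightHom : G →* Multiplicative ℤ).ker.index = 0 := by
        rw [Subgroup.index_ker,
          MonoidHom.range_eq_top.mpr SemidirectProduct.rightHom_surjective]
        rw [Nat.card_congr Subgroup.topEquiv.toEquiv]
        exact Nat.card_eq_zero_of_infinite
      have : (Subgroup.closure ((G₁ : Set G) ∪ (G₂ : Set G))).index = 0 := by
        have hd := Subgroup.index_dvd_of_le hsub
        rw [hker0] at hd
        exact zero_dvd_iff.mp hd
      exact hfin.index_ne_zero this
end

section
/- If a group Γ is not presentable by a product, then every finite-index subgroup of Γ has finite centre. -/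
universe u

theorem stmt_11 {Γ : Type u} [Group Γ] [Infinite Γ]
    (h : ∀ (G₁ G₂ : Type u) [Group G₁] [Group G₂] (φ : G₁ × G₂ →* Γ),
      φ.range.FiniteIndex →
        (((φ.comp (MonoidHom.inl G₁ G₂)).range : Subgroup Γ) : Set Γ).Finite ∨
        (((φ.comp (MonoidHom.inr G₁ G₂)).range : Subgroup Γ) : Set Γ).Finite) :
    ∀ H : Subgroup Γ, H.FiniteIndex → (Subgroup.center ↥H : Set ↥H).Finite := by
  intro H hH
  -- multiplication map (z, h) ↦ z * h
  set φ : ↥(Subgroup.center ↥H) × ↥H →* Γ :=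
    { toFun := fun p => ((p.1 : ↥H) * p.2 : ↥H)
      map_one' := by simp
      map_mul' := fun p q => by
        have hc : (p.2 : ↥H) * q.1 = (q.1 : ↥H) * p.2 :=
          Subgroup.mem_center_iff.mp q.1.2 p.2
        have key : ((p.1 * q.1 : ↥(Subgroup.center ↥H)) : ↥H) * (p.2 * q.2)
            = ((p.1 : ↥H) * p.2) * ((q.1 : ↥H) * q.2) := by
          push_cast
          rw [mul_assoc, ← mul_assoc (q.1 : ↥H), ← hc, mul_assoc, ← mul_assoc]
        simpa using congrArg (fun x : ↥H => (x : Γ)) key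
  } with hφ
  have hle : H ≤ φ.range := by
    intro x hx
    exact ⟨(1, ⟨x, hx⟩), by simp [hφ]⟩
  haveI : H.FiniteIndex := hH
  have hfi : φ.range.FiniteIndex := Subgroup.finiteIndex_of_le hle
  rcases h _ _ φ hfi with hc | hc
  · -- center image finite
    have : Finite ↥(((φ.comp (MonoidHom.inl _ _)).range : Subgroup Γ) : Set Γ) :=
      hc.to_subtype
    rw [Set.finite_coe_iff.symm]
    refine Finite.of_injective
      (fun z => (⟨φ (z, 1), ⟨z, rfl⟩⟩ :
        ↥(((φ.comp (MonoidHom.inl _ _)).range : Subgroup Γ) : Set Γ))) ?_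
    intro a b hab
    simp only [Subtype.mk.injEq, hφ, MonoidHom.coe_mk, OneHom.coe_mk, mul_one] at hab
    exact Subtype.ext (Subtype.ext hab)
  · -- H finite: contradiction with infinite Γ of finite index
    exfalso
    have hHset : (H : Set Γ).Finite :=
      hc.subset (fun x hx => MonoidHom.mem_range.mpr ⟨⟨x, hx⟩, by simp [hφ]⟩)
    haveI : Finite ↥H := hHset.to_subtype
    have := Subgroup.card_mul_index H
    have h1 : Nat.card ↥H ≠ 0 := Nat.card_ne_zero.mpr ⟨⟨1, H.one_mem⟩, inferInstance⟩
    have h2 : H.index ≠ 0 := hH.index_ne_zero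
    have h3 : Nat.card Γ ≠ 0 := by rw [← this]; exact mul_ne_zero h1 h2
    exact h3 Nat.card_eq_zero_of_infinite
end

section
/- Let Γ be a group and H ≤ Γ a subgroup of finite index. Then H is presentable by a product if and only if Γ is presentable by a product. -/
/-!
Going up, the factors of a product decomposition of `H` also serve for `G`, since indices
multiply along `K ≤ H ≤ G`. Going down, intersect the factors `G₁, G₂` of `G` with `H`; a finite-index subgroup of an infinite
group is infinite, so `G₁ ⊓ H` and `G₂ ⊓ H` stay infinite. Since the factors commute,
multiplication `G₁ × G₂ → G₁ ⊔ G₂` is a surjective homomorphism, and the preimage of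
`(G₁ ⊓ H) ⊔ (G₂ ⊓ H)` contains `(G₁ ⊓ H) × (G₂ ⊓ H)`, which has finite index in `G₁ × G₂`.
-/

namespace Subgroup

variable {G : Type*} [Group G]

lemma relIndex_sup_dvd_of_commute {G₁ G₂ : Subgroup G}
    (hc : ∀ g₁ ∈ G₁, ∀ g₂ ∈ G₂, Commute g₁ g₂) (A B : Subgroup G) :
    (A ⊔ B).relIndex (G₁ ⊔ G₂) ∣ A.relIndex G₁ * B.relIndex G₂ := by
  let φ := G₁.subtype.noncommCoprod G₂.subtype fun a b ↦ hc a a.2 b b.2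
  have hrange : φ.range = G₁ ⊔ G₂ :=
    (MonoidHom.noncommCoprod_range _ _ _).trans (by rw [range_subtype, range_subtype])
  have hprod : (A.subgroupOf G₁).prod (B.subgroupOf G₂) ≤ (A ⊔ B).comap φ := fun p hp ↦
    mem_comap.mpr (mul_mem (mem_sup_left (mem_prod.mp hp).1) (mem_sup_right (mem_prod.mp hp).2))
  rw [← hrange, ← index_comap, relIndex, relIndex, ← index_prod]
  exact index_dvd_of_le hprod

lemma finiteIndex_inf_sup_inf_of_commute {G₁ G₂ : Subgroup G}
    (hc : ∀ g₁ ∈ G₁, ∀ g₂ ∈ G₂, Commute g₁ g₂) (hG : (G₁ ⊔ G₂).FiniteIndex)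
    (H : Subgroup G) [H.FiniteIndex] : (G₁ ⊓ H ⊔ G₂ ⊓ H).FiniteIndex := by
  have hdvd := relIndex_sup_dvd_of_commute hc (G₁ ⊓ H) (G₂ ⊓ H)
  rw [inf_relIndex_left, inf_relIndex_left] at hdvd
  have hrel : (G₁ ⊓ H ⊔ G₂ ⊓ H).relIndex (G₁ ⊔ G₂) ≠ 0 :=
    ne_zero_of_dvd_ne_zero (mul_ne_zero isFiniteRelIndex_of_finiteIndex.relIndex_ne_zero
      isFiniteRelIndex_of_finiteIndex.relIndex_ne_zero) hdvd
  rw [finiteIndex_iff, ← relIndex_mul_index (sup_le_sup inf_le_left inf_le_left)]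
  exact mul_ne_zero hrel hG.index_ne_zero

lemma infinite_map_subtype_iff {H : Subgroup G} (K : Subgroup H) :
    ((K.map H.subtype : Subgroup G) : Set G).Infinite ↔ (K : Set H).Infinite := by
  rw [coe_map]
  exact Set.infinite_image_iff H.subtype_injective.injOn

lemma infinite_inf_of_finiteIndex {K : Subgroup G} (hK : (K : Set G).Infinite)
    (H : Subgroup G) [H.FiniteIndex] : ((K ⊓ H : Subgroup G) : Set G).Infinite := by
  rw [inf_comm, ← subgroupOf_map_subtype, infinite_map_subtype_iff, ← Set.infinite_coe_iff]
  have : Infinite K := hK.to_subtype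
  exact not_finite_iff_infinite.mp fun hfin ↦
    ((finite_iff_finite_and_finiteIndex (H.subgroupOf K)).mpr ⟨hfin, inferInstance⟩).false

lemma finiteIndex_map_subtype_iff {H : Subgroup G} [H.FiniteIndex] (K : Subgroup H) :
    (K.map H.subtype).FiniteIndex ↔ K.FiniteIndex := by
  rw [finiteIndex_iff, finiteIndex_iff, index_map_subtype, mul_ne_zero_iff]
  exact and_iff_left FiniteIndex.index_ne_zero

end Subgroup

open Subgroup

lemma presentableByProduct_iff {G : Type*} [Group G] :
    PresentableByProduct G ↔ ∃ G₁ G₂ : Subgroup G, (G₁ : Set G).Infinite ∧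
      (G₂ : Set G).Infinite ∧ (∀ g₁ ∈ G₁, ∀ g₂ ∈ G₂, Commute g₁ g₂) ∧ (G₁ ⊔ G₂).FiniteIndex := by
  simp only [PresentableByProduct, ← sup_eq_closure, Commute, SemiconjBy]

namespace PresentableByProduct

variable {G : Type*} [Group G] (H : Subgroup G) [H.FiniteIndex]

lemma of_subgroup (hH : PresentableByProduct H) : PresentableByProduct G := by
  obtain ⟨K₁, K₂, h₁, h₂, hc, hsup⟩ := presentableByProduct_iff.mp hH
  refine presentableByProduct_iff.mpr ⟨K₁.map H.subtype, K₂.map H.subtype,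
    (infinite_map_subtype_iff K₁).mpr h₁, (infinite_map_subtype_iff K₂).mpr h₂, ?_, ?_⟩
  · rintro _ ⟨a, ha, rfl⟩ _ ⟨b, hb, rfl⟩
    exact (hc a ha b hb).map H.subtype
  · rw [← Subgroup.map_sup]
    exact (finiteIndex_map_subtype_iff _).mpr hsup

lemma to_subgroup (hG : PresentableByProduct G) : PresentableByProduct H := by
  obtain ⟨G₁, G₂, h₁, h₂, hc, hsup⟩ := presentableByProduct_iff.mp hG
  refine presentableByProduct_iff.mpr ⟨G₁.subgroupOf H, G₂.subgroupOf H, ?_, ?_,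
    fun a ha b hb ↦ Subtype.ext (hc a ha b hb), ?_⟩
  · rw [← infinite_map_subtype_iff, subgroupOf_map_subtype]
    exact infinite_inf_of_finiteIndex h₁ H
  · rw [← infinite_map_subtype_iff, subgroupOf_map_subtype]
    exact infinite_inf_of_finiteIndex h₂ H
  · rw [← finiteIndex_map_subtype_iff, Subgroup.map_sup, subgroupOf_map_subtype,
      subgroupOf_map_subtype]
    exact finiteIndex_inf_sup_inf_of_commute hc hsup H

end PresentableByProduct

theorem stmt_12 {Γ : Type*} [Group Γ] (H : Subgroup Γ) (hH : H.FiniteIndex) :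
    PresentableByProduct ↥H ↔ PresentableByProduct Γ :=
  ⟨PresentableByProduct.of_subgroup H, PresentableByProduct.to_subgroup H⟩
end

section
/- Let F be a group whose commutator subgroup [F,F] is an infinite simple group, which is contained in every non-trivial normal subgroup of F, and such that every finite-index subgroup of F has trivial centre. Then F is not presentable by a product. -/
/-!
Let `D = [F, F]` and let `H` be generated by commuting infinite subgroups `G₁`, `G₂`, of finite
index. The normal core of `H` is a non-trivial normal subgroup, so `D ≤ H`. The centralizer of `D`
is normal; were it non-trivial it would contain `D`, making `D` abelian, hence finite. So
`C(D) = 1`, and any subgroup `N` normalized by `D` with `D ∩ N = 1` is trivial, since then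
`[D, N] ≤ D ∩ N = 1`. Now `Nᵢ = H ∩ C(G₃₋ᵢ)` is normalized by `H`, contains `Gᵢ`, and
`N₁ ∩ N₂ ≤ Z(H) = 1`. By simplicity, `D ∩ N₁` is `1` or `D`; in the first case `N₁ = 1`, in the
second `D ∩ N₂ ≤ N₁ ∩ N₂ = 1` and `N₂ = 1`. Either way an infinite `Gᵢ` is trivial.
-/

namespace Subgroup

variable {G : Type*} [Group G]

theorem closure_union_le_normalizer_inf_centralizer {A B : Subgroup G}
    (hAB : A ≤ centralizer (B : Set G)) :
    closure ((A : Set G) ∪ B) ≤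
      normalizer ((closure ((A : Set G) ∪ B) ⊓ centralizer (B : Set G) : Subgroup G) : Set G) := by
  have hB : closure ((A : Set G) ∪ B) ≤ normalizer (B : Set G) :=
    closure_le _ |>.mpr <| Set.union_subset (hAB.trans (centralizer_le_normalizer _)) le_normalizer
  exact (le_inf le_normalizer
    (hB.trans (le_normalizer_of_normal_subgroupOf (centralizer_le_normalizer _)))).trans
    inf_normalizer_le_normalizer_inf

theorem inf_centralizer_eq_bot_of_center_eq_bot {H : Subgroup G} (hZ : center H = ⊥) :
    H ⊓ centralizer (H : Set G) = ⊥ := by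
  refine eq_bot_iff.mpr fun x ⟨hxH, hxC⟩ => ?_
  have : (⟨x, hxH⟩ : H) ∈ center H := mem_center_iff.mpr fun g => Subtype.ext (hxC g g.2)
  simpa [hZ] using this

theorem inf_centralizer_inf_inf_centralizer_eq_bot {A B : Subgroup G}
    (hZ : center (closure ((A : Set G) ∪ B)) = ⊥) :
    (closure ((A : Set G) ∪ B) ⊓ centralizer (B : Set G)) ⊓
      (closure ((A : Set G) ∪ B) ⊓ centralizer (A : Set G)) = ⊥ := by
  refine eq_bot_iff.mpr (le_trans ?_ (inf_centralizer_eq_bot_of_center_eq_bot hZ).le)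
  refine le_inf (inf_le_left.trans inf_le_left) ?_
  rw [centralizer_closure]
  rintro x ⟨⟨-, hxB⟩, -, hxA⟩ y (hy | hy)
  exacts [hxA y hy, hxB y hy]

theorem le_centralizer_of_le_normalizer_of_inf_eq_bot {D N : Subgroup G} [D.Normal]
    (hDN : D ≤ normalizer (N : Set G)) (h : D ⊓ N = ⊥) : N ≤ centralizer (D : Set G) := by
  rw [← commutator_eq_bot_iff_le_centralizer, eq_bot_iff, ← h, commutator_le]
  intro n hn d hd
  rw [commutatorElement_def]
  refine ⟨D.mul_mem (‹D.Normal›.conj_mem d hd n) (D.inv_mem hd), ?_⟩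
  rw [mul_assoc, mul_assoc]
  exact N.mul_mem hn (mul_assoc d _ _ ▸ (mem_normalizer_iff.mp (hDN hd) _).mp (N.inv_mem hn))

theorem inf_eq_bot_or_le_of_le_normalizer {D N : Subgroup G} [IsSimpleGroup D]
    (hDN : D ≤ normalizer (N : Set G)) : D ⊓ N = ⊥ ∨ D ≤ N :=
  (normal_subgroupOf_of_le_normalizer hDN).eq_bot_or_eq_top.imp
    (fun h => (subgroupOf_eq_bot.mp h).symm.eq_bot) subgroupOf_eq_top.mp

theorem le_of_finiteIndex_of_forall_normal [Infinite G] {K : Subgroup G}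
    (hK : ∀ N : Subgroup G, N.Normal → N ≠ ⊥ → K ≤ N) (H : Subgroup G) [H.FiniteIndex] :
    K ≤ H := by
  refine (hK _ inferInstance fun h => ?_).trans H.normalCore_le
  have := (H.normalCore.finiteIndex_iff.mp inferInstance)
  rw [h, index_bot, Nat.card_eq_zero_of_infinite] at this
  exact this rfl

theorem centralizer_eq_bot_of_forall_normal {K : Subgroup G} [K.Normal] [IsSimpleGroup K]
    [Infinite K] (hK : ∀ N : Subgroup G, N.Normal → N ≠ ⊥ → K ≤ N) :
    centralizer (K : Set G) = ⊥ := by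
  by_contra hC
  have := le_centralizer_iff_isMulCommutative.mp (hK _ inferInstance hC)
  have := Group.is_simple_iff_prime_card.mp ‹IsSimpleGroup K›
  rw [Nat.card_eq_zero_of_infinite] at this
  exact Nat.not_prime_zero this

end Subgroup

theorem stmt_13 {F : Type*} [Group F]
    (h1 : (commutator F : Set F).Infinite)
    (h2 : IsSimpleGroup ↥(commutator F))
    (h3 : ∀ N : Subgroup F, N.Normal → N ≠ ⊥ → commutator F ≤ N)
    (h4 : ∀ H : Subgroup F, H.FiniteIndex → Subgroup.center ↥H = ⊥) :
    ¬ PresentableByProduct F := by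
  open Subgroup in
  rintro ⟨G₁, G₂, hG₁, hG₂, hcomm, hH⟩
  set H := closure ((G₁ : Set F) ∪ G₂)
  have : Infinite (commutator F) := h1.to_subtype
  have : Infinite F := .of_injective (Subtype.val : commutator F → F) Subtype.val_injective
  have hDH : commutator F ≤ H := le_of_finiteIndex_of_forall_normal h3 H
  have hC : centralizer (commutator F : Set F) = ⊥ := centralizer_eq_bot_of_forall_normal h3
  set N₁ := H ⊓ centralizer (G₂ : Set F)
  set N₂ := H ⊓ centralizer (G₁ : Set F)
  have hN₁ : H ≤ normalizer (N₁ : Set F) :=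
    closure_union_le_normalizer_inf_centralizer fun x hx y hy => (hcomm x hx y hy).symm
  have hN₂ : H ≤ normalizer (N₂ : Set F) := by
    simpa only [H, N₂, Set.union_comm] using
      closure_union_le_normalizer_inf_centralizer (A := G₂) (B := G₁)
        fun x hx y hy => hcomm y hy x hx
  have hN₁₂ : N₁ ⊓ N₂ = ⊥ := inf_centralizer_inf_inf_centralizer_eq_bot (h4 H hH)
  have hG₁N₁ : G₁ ≤ N₁ :=
    le_inf (fun x hx => subset_closure (Or.inl hx)) fun x hx y hy => (hcomm x hx y hy).symm
  have hG₂N₂ : G₂ ≤ N₂ :=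
    le_inf (fun x hx => subset_closure (Or.inr hx)) fun x hx y hy => hcomm y hy x hx
  have key : ∀ {A N : Subgroup F}, (A : Set F).Infinite → A ≤ N → H ≤ normalizer (N : Set F) →
      commutator F ⊓ N ≠ ⊥ := by
    intro A N hA hAN hN h
    obtain rfl : N = ⊥ :=
      eq_bot_iff.mpr (hC ▸ le_centralizer_of_le_normalizer_of_inf_eq_bot (hDH.trans hN) h)
    exact hA.mono hAN (by simp)
  rcases inf_eq_bot_or_le_of_le_normalizer (hDH.trans hN₁) with h | h
  · exact key hG₁ hG₁N₁ hN₁ h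
  · exact key hG₂ hG₂N₂ hN₂ (eq_bot_iff.mpr (hN₁₂ ▸ inf_le_inf_right N₂ h))
end

section
/- An infinite simple group is not presentable by a product. -/
namespace Subgroup

variable {G : Type*} [Group G]

theorem normal_of_sup_eq_top_of_le_centralizer {H K : Subgroup G} (hK : K ≤ centralizer H)
    (hsup : H ⊔ K = ⊤) : H.Normal := by
  rw [← normalizer_eq_top_iff, eq_top_iff, ← hsup]
  exact sup_le le_normalizer (hK.trans (centralizer_le_normalizer _))

theorem eq_top_of_normal_of_infinite [IsSimpleGroup G] {H : Subgroup G} (hn : H.Normal)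
    (hH : (H : Set G).Infinite) : H = ⊤ :=
  hn.eq_bot_or_eq_top.resolve_left fun h => hH (by simp [h])

theorem eq_top_of_finiteIndex [Infinite G] [IsSimpleGroup G] (H : Subgroup G) [H.FiniteIndex] :
    H = ⊤ := by
  have hcore : H.normalCore ≠ ⊥ := fun h => by
    simpa [h, index_bot] using (inferInstance : H.normalCore.FiniteIndex).index_ne_zero
  exact top_le_iff.mp <|
    ((normalCore_normal H).eq_bot_or_eq_top.resolve_left hcore).ge.trans (normalCore_le H)

end Subgroup

theorem IsSimpleGroup.finite_of_commute {G : Type*} [Group G] [IsSimpleGroup G]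
    (hcomm : ∀ a b : G, a * b = b * a) : Finite G := by
  let _ : CommGroup G := { ‹Group G› with mul_comm := hcomm }
  exact Nat.finite_of_card_ne_zero (CommGroup.is_simple_iff_prime_card.mp ‹_›).ne_zero

theorem stmt_14 {Γ : Type*} [Group Γ] [Infinite Γ] (hs : IsSimpleGroup Γ) :
    ¬ PresentableByProduct Γ := by
  rintro ⟨G₁, G₂, h₁, h₂, hcomm, hfi⟩
  have hsup : G₁ ⊔ G₂ = ⊤ := by
    simpa only [Subgroup.closure_union, Subgroup.closure_eq] using
      Subgroup.eq_top_of_finiteIndex (Subgroup.closure ((G₁ : Set Γ) ∪ G₂))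
  have hcent : G₂ ≤ Subgroup.centralizer G₁ := fun g₂ hg₂ =>
    Subgroup.mem_centralizer_iff.mpr fun g₁ hg₁ => hcomm g₁ hg₁ g₂ hg₂
  have htop₁ : G₁ = ⊤ := Subgroup.eq_top_of_normal_of_infinite
    (Subgroup.normal_of_sup_eq_top_of_le_centralizer hcent hsup) h₁
  have htop₂ : G₂ = ⊤ := Subgroup.eq_top_of_normal_of_infinite
    (Subgroup.normal_of_sup_eq_top_of_le_centralizer (Subgroup.le_centralizer_iff.mp hcent)
      (sup_comm G₁ G₂ ▸ hsup)) h₂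
  have := IsSimpleGroup.finite_of_commute fun a b =>
    hcomm a (htop₁ ▸ Subgroup.mem_top a) b (htop₂ ▸ Subgroup.mem_top b)
  exact not_finite Γ
end
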